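/- arXiv:2206.03172 — 2 statements merged into one kernel-verified Lean document; each statement's English description precedes it below -/
import Mathlib

section
/- Let (R, R′, Is″) be an inter-representational-system encoding, where R = (Gs, Es, Is) and R′ = (Gs′, Es′, Is′). Then (Gs ∪ Gs′, Es ∪ Es′, Is ∪ Is′ ∪ Is″) is a representational system. -/
namespace RST

/-! ## Type systems -/

/-- A relation (given as a set of pairs) is a partial order on the set `Ty`. -/
def IsPartialOrderOn {U : Type*} (Ty : Set U) (le : Set (U × U)) : Prop :=
  (∀ p ∈ le, p.1 ∈ Ty ∧ p.2 ∈ Ty) ∧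
  (∀ τ ∈ Ty, (τ, τ) ∈ le) ∧
  (∀ a b : U, (a, b) ∈ le → (b, a) ∈ le → a = b) ∧
  (∀ a b c : U, (a, b) ∈ le → (b, c) ∈ le → (a, c) ∈ le)

/-- The subtype closure of `Ty'` in the type system `(Ty, le)`. -/
def subtypeClosure {U : Type*} (Ty : Set U) (le : Set (U × U)) (Ty' : Set U) : Set U :=
  {τ | τ ∈ Ty ∧ ∃ τ' ∈ Ty', (τ, τ') ∈ le}

/-- The set of all subtype closures of subsets of `Ty`. -/
def SC {U : Type*} (Ty : Set U) (le : Set (U × U)) : Set (Set U) :=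
  {S | ∃ Ty' ⊆ Ty, S = subtypeClosure Ty le Ty'}

/-- The candidate order of an upper bound extension: the reflexive closure (on `Ty ∪ Tystar`)
of `le` together with the pairs `(τ, f S)` for `τ ∈ S ∈ SC Ty le`. -/
def upperBoundRel {U : Type*} (Ty Tystar : Set U) (le : Set (U × U)) (f : Set U → U) :
    Set (U × U) :=
  (le ∪ {p : U × U | ∃ S ∈ SC Ty le, p.1 ∈ S ∧ p.2 = f S}) ∪
    {p : U × U | p.1 = p.2 ∧ p.1 ∈ Ty ∪ Tystar}

/-! ## Graphs -/

/-- A (raw) directed labelled bipartite graph: tokens `Tk`, configurators `Cf`, arrows `Arr`,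
incidence, arrow indices and vertex labels all given relationally (as sets of pairs), so that
unions of graphs are componentwise unions. -/
structure PreGraph (V A L : Type*) where
  Tk : Set V
  Cf : Set V
  Arr : Set A
  inc : Set (A × (V × V))
  ia : Set (A × ℕ)
  tl : Set (V × L)
  cl : Set (V × L)

variable {V A L : Type*}

instance : Union (PreGraph V A L) :=
  ⟨fun g h =>
    ⟨g.Tk ∪ h.Tk, g.Cf ∪ h.Cf, g.Arr ∪ h.Arr, g.inc ∪ h.inc, g.ia ∪ h.ia,
      g.tl ∪ h.tl, g.cl ∪ h.cl⟩⟩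

def PreGraph.Subgraph (h g : PreGraph V A L) : Prop :=
  h.Tk ⊆ g.Tk ∧ h.Cf ⊆ g.Cf ∧ h.Arr ⊆ g.Arr ∧ h.inc ⊆ g.inc ∧ h.ia ⊆ g.ia ∧
    h.tl ⊆ g.tl ∧ h.cl ⊆ g.cl

/-- The vertices adjacent to `u` (together with `u`). -/
def PreGraph.adjTo (g : PreGraph V A L) (u : V) : Set V :=
  {u} ∪ {v | ∃ a ∈ g.Arr, (a, (v, u)) ∈ g.inc ∨ (a, (u, v)) ∈ g.inc}

/-- The arrows incident to `u`. -/
def PreGraph.incidentArrows (g : PreGraph V A L) (u : V) : Set A :=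
  {a | a ∈ g.Arr ∧ ∃ v, (a, (v, u)) ∈ g.inc ∨ (a, (u, v)) ∈ g.inc}

/-- The restriction of a graph to given vertex and arrow sets. -/
def PreGraph.restrict (g : PreGraph V A L) (Vs : Set V) (As : Set A) : PreGraph V A L :=
  ⟨g.Tk ∩ Vs, g.Cf ∩ Vs, g.Arr ∩ As, {q | q ∈ g.inc ∧ q.1 ∈ As},
    {q | q ∈ g.ia ∧ q.1 ∈ As}, {q | q ∈ g.tl ∧ q.1 ∈ Vs}, {q | q ∈ g.cl ∧ q.1 ∈ Vs}⟩

/-- The neighbourhood of a vertex `u`. -/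
def PreGraph.Nh (g : PreGraph V A L) (u : V) : PreGraph V A L :=
  g.restrict (g.adjTo u) (g.incidentArrows u)

/-- A set of pairs is (the graph of) a function with domain `D`. -/
def IsFunctionOn {α β : Type*} (R : Set (α × β)) (D : Set α) : Prop :=
  (∀ p ∈ R, p.1 ∈ D) ∧ ∀ x ∈ D, ∃! y, (x, y) ∈ R

/-- A raw graph is a genuine directed labelled bipartite graph. -/
def IsGraph (g : PreGraph V A L) : Prop :=
  Disjoint g.Tk g.Cf ∧
  IsFunctionOn g.inc g.Arr ∧
  (∀ a v w, (a, (v, w)) ∈ g.inc → (v ∈ g.Tk ∧ w ∈ g.Cf) ∨ (v ∈ g.Cf ∧ w ∈ g.Tk)) ∧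
  IsFunctionOn g.ia g.Arr ∧ IsFunctionOn g.tl g.Tk ∧ IsFunctionOn g.cl g.Cf

/-- `ars` is the list of incoming arrows of `u`, listed in increasing index order
(the arrow at position `i` carries index `i+1`). -/
def InArrowSeq (g : PreGraph V A L) (u : V) (ars : List A) : Prop :=
  ars.Nodup ∧ (∀ a : A, a ∈ ars ↔ a ∈ g.Arr ∧ ∃ w, (a, (w, u)) ∈ g.inc) ∧
  ∀ (i : ℕ) (a : A), ars[i]? = some a → (a, i + 1) ∈ g.ia

/-- `t` is an output token of the configurator `u`. -/
def OutputTok (g : PreGraph V A L) (u t : V) : Prop :=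
  ∃ a ∈ g.Arr, (a, (u, t)) ∈ g.inc

/-- `ts` is the input token-sequence of the configurator `u`. -/
def InputTokSeq (g : PreGraph V A L) (u : V) (ts : List V) : Prop :=
  ∃ ars : List A, InArrowSeq g u ars ∧
    List.Forall₂ (fun a v => (a, (v, u)) ∈ g.inc) ars ts

/-- `τs` is the input type-sequence of the configurator `u`. -/
def InputTypeSeq (g : PreGraph V A L) (u : V) (τs : List L) : Prop :=
  ∃ ts : List V, InputTokSeq g u ts ∧ List.Forall₂ (fun v τ => (v, τ) ∈ g.tl) ts τs

/-- `g` is a configuration of the constructor `c` (with signature `(ins, out)`),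
whose single configurator is `u`. -/
def IsConfiguration (le : Set (L × L)) (g : PreGraph V A L) (u : V) (c : L)
    (ins : List L) (out : L) : Prop :=
  IsGraph g ∧ g.Cf = {u} ∧ (u, c) ∈ g.cl ∧
  g.Tk = {v | ∃ a ∈ g.Arr, (a, (v, u)) ∈ g.inc ∨ (a, (u, v)) ∈ g.inc} ∧
  (∃! a0 : A, a0 ∈ g.Arr ∧ ∃ w, (a0, (u, w)) ∈ g.inc) ∧
  (∀ a0 ∈ g.Arr, ∀ w : V, (a0, (u, w)) ∈ g.inc →
      (a0, 0) ∈ g.ia ∧ ∃ σ, (w, σ) ∈ g.tl ∧ (σ, out) ∈ le) ∧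
  (∃ ars : List A, InArrowSeq g u ars ∧ ars.length = ins.length ∧
    ∀ (i : ℕ) (a : A) (τ : L), ars[i]? = some a → ins[i]? = some τ →
      ∃ w σ, (a, (w, u)) ∈ g.inc ∧ (w, σ) ∈ g.tl ∧ (σ, τ) ∈ le)

/-- A structure graph for the constructor specification `(C, sig)` over types `(Ty, le)`. -/
def IsStructureGraph (Ty : Set L) (le : Set (L × L)) (C : Set L)
    (sig : Set (L × (List L × L))) (g : PreGraph V A L) : Prop :=
  IsGraph g ∧ (∀ x τ, (x, τ) ∈ g.tl → τ ∈ Ty) ∧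
  ∀ u ∈ g.Cf, ∃ c ins out, (u, c) ∈ g.cl ∧ c ∈ C ∧ (c, (ins, out)) ∈ sig ∧
    IsConfiguration le (g.Nh u) u c ins out

/-! ## Construction spaces -/

/-- The raw data of a construction space: a type system, a constructor specification and
a structure graph. -/
structure CSpace (V A L : Type*) where
  Ty : Set L
  le : Set (L × L)
  C : Set L
  sig : Set (L × (List L × L))
  G : PreGraph V A L

instance : Union (CSpace V A L) :=
  ⟨fun c d => ⟨c.Ty ∪ d.Ty, c.le ∪ d.le, c.C ∪ d.C, c.sig ∪ d.sig, c.G ∪ d.G⟩⟩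

/-- The raw data forms a genuine construction space. -/
def IsCSpace (Cs : CSpace V A L) : Prop :=
  IsPartialOrderOn Cs.Ty Cs.le ∧ Disjoint Cs.C Cs.Ty ∧ IsFunctionOn Cs.sig Cs.C ∧
  (∀ c ins out, (c, (ins, out)) ∈ Cs.sig →
      ins ≠ [] ∧ (∀ τ ∈ ins, τ ∈ Cs.Ty) ∧ out ∈ Cs.Ty) ∧
  IsStructureGraph Cs.Ty Cs.le Cs.C Cs.sig Cs.G

/-- Token-functionality of the constructors of a structure graph. -/
def TokenFunctional (g : PreGraph V A L) : Prop :=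
  ∀ u u' c, u ∈ g.Cf → u' ∈ g.Cf → (u, c) ∈ g.cl → (u', c) ∈ g.cl →
    ∀ ts, InputTokSeq g u ts → InputTokSeq g u' ts →
      ∀ t t', OutputTok g u t → OutputTok g u' t' → t = t'

/-- Type-functionality of the constructors of a structure graph. -/
def TypeFunctional (g : PreGraph V A L) : Prop :=
  ∀ u u' c, u ∈ g.Cf → u' ∈ g.Cf → (u, c) ∈ g.cl → (u', c) ∈ g.cl →
    ∀ τs, InputTypeSeq g u τs → InputTypeSeq g u' τs →
      ∀ t t' τ τ', OutputTok g u t → OutputTok g u' t' →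
        (t, τ) ∈ g.tl → (t', τ') ∈ g.tl → τ = τ'

def IsFunctionalGraph (g : PreGraph V A L) : Prop :=
  TokenFunctional g ∧ TypeFunctional g

/-! ## Representational systems -/

/-- The raw data of a representational system: grammatical, entailment and identification
spaces. -/
structure RSystem (V A L : Type*) where
  Gs : CSpace V A L
  Es : CSpace V A L
  Is : CSpace V A L

instance : Union (RSystem V A L) :=
  ⟨fun r s => ⟨r.Gs ∪ s.Gs, r.Es ∪ s.Es, r.Is ∪ s.Is⟩⟩

/-- The universal space of a representational system. -/
def RSystem.uspace (R : RSystem V A L) : CSpace V A L := (R.Gs ∪ R.Es) ∪ R.Is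

/-- `R` is a representational system formed over the type system `(Ty, le)` and the
meta-type system `(MTy, Mle)`. -/
def IsRSystem (R : RSystem V A L) (Ty : Set L) (le : Set (L × L))
    (MTy : Set L) (Mle : Set (L × L)) : Prop :=
  IsPartialOrderOn Ty le ∧ IsPartialOrderOn MTy Mle ∧
  IsPartialOrderOn (Ty ∪ MTy) (le ∪ Mle) ∧
  R.Gs.Ty = Ty ∧ R.Gs.le = le ∧ IsCSpace R.Gs ∧ IsFunctionalGraph R.Gs.G ∧
  R.Es.Ty = Ty ∧ R.Es.le = le ∧ IsCSpace R.Es ∧ R.Es.G.Tk ⊆ R.Gs.G.Tk ∧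
  R.Is.Ty = Ty ∪ MTy ∧ R.Is.le = le ∪ Mle ∧ IsCSpace R.Is ∧
  (∀ x ∈ R.Is.G.Tk, x ∉ R.Gs.G.Tk → ∃ τ ∈ MTy, (x, τ) ∈ R.Is.G.tl) ∧
  (∀ x ∈ R.Is.G.Tk, (∃ u ∈ R.Is.G.Cf, OutputTok R.Is.G u x) → x ∉ R.Gs.G.Tk) ∧
  IsCSpace (R.Gs ∪ R.Es) ∧ IsCSpace (R.Gs ∪ R.Is) ∧ IsCSpace (R.Es ∪ R.Is) ∧
  Disjoint R.Gs.C R.Es.C ∧ Disjoint R.Gs.C R.Is.C ∧ Disjoint R.Es.C R.Is.C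

/-- `(R, R', Is'')` is an inter-representational-system encoding, where `R` is formed over
`(Ty, le)` and `(MTy, Mle)`, `R'` over `(Ty', le')` and `(MTy', Mle')`, and `Is''` is an
identification space formed over `(Ty ∪ Ty', le ∪ le')` and `(MTy'', Mle'')`. -/
def IsIRSE (R R' : RSystem V A L) (Is'' : CSpace V A L)
    (Ty : Set L) (le : Set (L × L)) (MTy : Set L) (Mle : Set (L × L))
    (Ty' : Set L) (le' : Set (L × L)) (MTy' : Set L) (Mle' : Set (L × L))
    (MTy'' : Set L) (Mle'' : Set (L × L)) : Prop :=
  IsRSystem R Ty le MTy Mle ∧ IsRSystem R' Ty' le' MTy' Mle' ∧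
  IsRSystem (R ∪ R') (Ty ∪ Ty') (le ∪ le') (MTy ∪ MTy') (Mle ∪ Mle') ∧
  IsPartialOrderOn MTy'' Mle'' ∧
  IsPartialOrderOn ((Ty ∪ Ty') ∪ MTy'') ((le ∪ le') ∪ Mle'') ∧
  Is''.Ty = (Ty ∪ Ty') ∪ MTy'' ∧ Is''.le = (le ∪ le') ∪ Mle'' ∧ IsCSpace Is'' ∧
  MTy ∪ MTy' ⊆ MTy'' ∧ Mle ∪ Mle' ⊆ Mle'' ∧
  (∀ x ∈ Is''.G.Tk, x ∉ (R.Gs ∪ R'.Gs).G.Tk → ∃ τ ∈ MTy'', (x, τ) ∈ Is''.G.tl) ∧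
  (∀ x ∈ Is''.G.Tk, (∃ u ∈ Is''.G.Cf, OutputTok Is''.G u x) →
      x ∉ (R.Gs ∪ R'.Gs).G.Tk) ∧
  IsCSpace ((R.Gs ∪ R'.Gs) ∪ Is'') ∧ IsCSpace ((R.Es ∪ R'.Es) ∪ Is'') ∧
  IsCSpace ((R.Is ∪ R'.Is) ∪ Is'') ∧
  Disjoint Is''.C (R.Gs ∪ R'.Gs).C ∧ Disjoint Is''.C (R.Es ∪ R'.Es).C ∧
  Disjoint Is''.C (R.Is ∪ R'.Is).C

/-! ## Trails -/

/-- A trail candidate: a list of arrows together with an associated source and target vertex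
(needed for the empty trail `[]_v`). -/
structure Trail (V A : Type*) where
  arrows : List A
  src : V
  tgt : V

/-- The empty trail `[]_v`. -/
def Trail.nil {V A : Type*} (v : V) : Trail V A := ⟨[], v, v⟩

/-- Concatenation `e ⊕ w` of trails. -/
def Trail.append {V A : Type*} (e w : Trail V A) : Trail V A :=
  ⟨e.arrows ++ w.arrows, e.src, w.tgt⟩

/-- The image of a trail under vertex/arrow maps. -/
def Trail.map {V A : Type*} (fv : V → V) (fa : A → A) (tr : Trail V A) : Trail V A :=
  ⟨tr.arrows.map fa, fv tr.src, fv tr.tgt⟩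

/-- The arrows chain through the graph from `s` to `t`. -/
def ChainIn (g : PreGraph V A L) : List A → V → V → Prop
  | [], s, t => s = t
  | a :: rest, s, t => a ∈ g.Arr ∧ ∃ m, (a, (s, m)) ∈ g.inc ∧ ChainIn g rest m t

/-- `tr` is a trail in `g`. -/
def IsTrailIn (g : PreGraph V A L) (tr : Trail V A) : Prop :=
  tr.arrows.Nodup ∧ ChainIn g tr.arrows tr.src tr.tgt ∧
  tr.src ∈ g.Tk ∪ g.Cf ∧ tr.tgt ∈ g.Tk ∪ g.Cf

/-- A trail is well-formed provided its source and target are tokens. -/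
def WellFormed (g : PreGraph V A L) (tr : Trail V A) : Prop :=
  tr.src ∈ g.Tk ∧ tr.tgt ∈ g.Tk

/-- `tr` is (source-)extendable by the arrow `a`. -/
def ExtendableBy (g : PreGraph V A L) (tr : Trail V A) (a : A) : Prop :=
  a ∈ g.Arr ∧ a ∉ tr.arrows ∧ ∃ s, (a, (s, tr.src)) ∈ g.inc

def Extendable (g : PreGraph V A L) (tr : Trail V A) : Prop :=
  ∃ a, ExtendableBy g tr a

def NonExtendable (g : PreGraph V A L) (tr : Trail V A) : Prop :=
  ¬ Extendable g tr

/-- `TES g tr S` holds iff `S` is the trail extension sequence of the trail `tr` in `g`,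
following the recursive definition of TES. -/
inductive TES (g : PreGraph V A L) : Trail V A → List (Trail V A) → Prop where
  | nonext (tr : Trail V A) (h : NonExtendable g tr) :
      TES g tr [⟨[], tr.src, tr.src⟩]
  | ext (tr : Trail V A) (a : A) (u : V) (ars : List A)
      (Ss : List (List (Trail V A)))
      (hext : ExtendableBy g tr a)
      (hinc : (a, (u, tr.src)) ∈ g.inc)
      (hars : InArrowSeq g u ars)
      (hlen : Ss.length = ars.length)
      (hrec : ∀ (i : ℕ) (ai : A) (si : V) (Si : List (Trail V A)),
          ars[i]? = some ai → Ss[i]? = some Si → (ai, (si, u)) ∈ g.inc →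
          TES g ⟨ai :: a :: tr.arrows, si, tr.tgt⟩ Si) :
      TES g tr (List.flatten (List.zipWith
        (fun (ai : A) (Si : List (Trail V A)) =>
          Si.map (fun e => (⟨e.arrows ++ [ai, a], e.src, tr.src⟩ : Trail V A)))
        ars Ss))

/-- The sequence of sources of a sequence of trails. -/
def srcSeq {V A : Type*} (S : List (Trail V A)) : List V := S.map Trail.src

/-- The right product `S ◁ w`, appending the trail `w` to each trail in `S`. -/
def rprod {V A : Type*} (S : List (Trail V A)) (w : Trail V A) : List (Trail V A) :=
  S.map fun e => e.append w

/-! ## Constructions -/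

/-- Every token is the target of at most one arrow. -/
def UniStructured (g : PreGraph V A L) : Prop :=
  ∀ x ∈ g.Tk, ∀ a ∈ g.Arr, ∀ b ∈ g.Arr,
    (∃ w, (a, (w, x)) ∈ g.inc) → (∃ w, (b, (w, x)) ∈ g.inc) → a = b

/-- `(g, t)` is a construction in the construction space `Cs`: `g` is a finite uni-structured
structure graph (a subgraph of the structure graph of `Cs`), `t` is a token of `g`, and every
vertex of `g` is the source of a trail targeting `t`. -/
def IsConstruction (Cs : CSpace V A L) (g : PreGraph V A L) (t : V) : Prop :=
  g.Subgraph Cs.G ∧ IsStructureGraph Cs.Ty Cs.le Cs.C Cs.sig g ∧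
  g.Tk.Finite ∧ g.Cf.Finite ∧ g.Arr.Finite ∧ UniStructured g ∧ t ∈ g.Tk ∧
  ∀ v ∈ g.Tk ∪ g.Cf, ∃ tr : Trail V A, IsTrailIn g tr ∧ tr.src = v ∧ tr.tgt = t

/-- `(g, t)` is a construction *in* `Cs` in the strong sense: moreover every configurator of `g`
has its full neighbourhood from the structure graph of `Cs`. -/
def IsConstructionIn (Cs : CSpace V A L) (g : PreGraph V A L) (t : V) : Prop :=
  IsConstruction Cs g t ∧ ∀ u ∈ g.Cf, g.Nh u = Cs.G.Nh u

/-- A trivial construction: the construct is its only vertex. -/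
def TrivialC (g : PreGraph V A L) (t : V) : Prop := g.Tk ∪ g.Cf = {t}

/-- A basic construction: exactly one configurator. -/
def BasicC (g : PreGraph V A L) : Prop := ∃ u, g.Cf = {u}

/-- The set of arrows occurring in a sequence of trails. -/
def trailArrowSet {V A : Type*} (TR : List (Trail V A)) : Set A :=
  {a | ∃ tr ∈ TR, a ∈ tr.arrows}

/-- The vertices of the `TR`-graph: vertices incident to arrows of trails of `TR`,
together with the associated vertex of any empty trail of `TR`. -/
def trailVertexSet (g : PreGraph V A L) (TR : List (Trail V A)) : Set V :=
  {v | (∃ a ∈ trailArrowSet TR, ∃ w, (a, (v, w)) ∈ g.inc ∨ (a, (w, v)) ∈ g.inc) ∨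
    ∃ tr ∈ TR, tr.arrows = [] ∧ tr.src = v}

/-- The `TR`-graph `v(TR)`. -/
def trGraph (g : PreGraph V A L) (TR : List (Trail V A)) : PreGraph V A L :=
  g.restrict (trailVertexSet g TR) (trailArrowSet TR)

/-- `((g', t), ics)` is a split of the construction `(g, t)`: `(g', t)` is a generator and
`ics` is the corresponding induced construction sequence (each induced construction is
`(v(TES(tri)), source(tri))`, the TES being computed in `(g, t)`). -/
def IsSplit (Cs : CSpace V A L) (g : PreGraph V A L) (t : V)
    (g' : PreGraph V A L) (ics : List (PreGraph V A L × V)) : Prop :=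
  IsConstruction Cs g' t ∧ g'.Subgraph g ∧
  ∃ trs : List (Trail V A), TES g' (Trail.nil t) trs ∧ ics.length = trs.length ∧
    ∀ (i : ℕ) (tri : Trail V A), trs[i]? = some tri →
      ∃ Si : List (Trail V A), TES g tri Si ∧ ics[i]? = some (trGraph g Si, tri.src)

/-! ## Decompositions -/

/-- A decomposition tree: vertices labelled by a graph and a token, with the incoming arrows
of every vertex given in index order by a list of subtrees. -/
inductive DTree (V A L : Type*) where
  | node : PreGraph V A L → V → List (DTree V A L) → DTree V A L

def DTree.rootGraph : DTree V A L → PreGraph V A L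
  | .node g _ _ => g

def DTree.rootTok : DTree V A L → V
  | .node _ t _ => t

def DTree.kids : DTree V A L → List (DTree V A L)
  | .node _ _ cs => cs

/-- `IsDecompositionOf Cs D g t` holds iff `D` is a decomposition of the construction
`(g, t)` in `Cs`. -/
inductive IsDecompositionOf (Cs : CSpace V A L) : DTree V A L → PreGraph V A L → V → Prop where
  | single (g : PreGraph V A L) (t : V) (h : IsConstruction Cs g t) :
      IsDecompositionOf Cs (.node g t []) g t
  | split (g : PreGraph V A L) (t : V) (g' : PreGraph V A L)
      (ics : List (PreGraph V A L × V)) (cs : List (DTree V A L))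
      (hc : IsConstruction Cs g t)
      (hsplit : IsSplit Cs g t g' ics)
      (hlen : cs.length = ics.length)
      (hrec : ∀ (i : ℕ) (ci : DTree V A L) (gi : PreGraph V A L) (ti : V),
          cs[i]? = some ci → ics[i]? = some (gi, ti) → IsDecompositionOf Cs ci gi ti) :
      IsDecompositionOf Cs (.node g' t cs) g t

/-- `LcsRel D ls` holds iff `ls` is the leaf construction-sequence of `D`. -/
inductive LcsRel : DTree V A L → List (PreGraph V A L × V) → Prop where
  | leaf (g : PreGraph V A L) (t : V) : LcsRel (.node g t []) [(g, t)]
  | node (g : PreGraph V A L) (t : V) (cs : List (DTree V A L))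
      (ls : List (List (PreGraph V A L × V)))
      (hne : cs ≠ []) (hlen : ls.length = cs.length)
      (h : ∀ (i : ℕ) (ci : DTree V A L) (li : List (PreGraph V A L × V)),
          cs[i]? = some ci → ls[i]? = some li → LcsRel ci li) :
      LcsRel (.node g t cs) ls.flatten

/-- `(p, w)` is one of the constructions labelling a vertex of the decomposition tree. -/
inductive LabelOf : DTree V A L → PreGraph V A L → V → Prop where
  | root (g : PreGraph V A L) (t : V) (cs : List (DTree V A L)) :
      LabelOf (.node g t cs) g t
  | child (g : PreGraph V A L) (t : V) (cs : List (DTree V A L))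
      (c : DTree V A L) (p : PreGraph V A L) (w : V) :
      c ∈ cs → LabelOf c p w → LabelOf (.node g t cs) p w

/-- The union of all the graphs labelling vertices of the decomposition tree
(the graph of the construction `ct(D)` of the decomposition `D`). -/
def DTree.ctGraph (D : DTree V A L) : PreGraph V A L :=
  ⟨{x | ∃ p w, LabelOf D p w ∧ x ∈ p.Tk},
   {x | ∃ p w, LabelOf D p w ∧ x ∈ p.Cf},
   {a | ∃ p w, LabelOf D p w ∧ a ∈ p.Arr},
   {q | ∃ p w, LabelOf D p w ∧ q ∈ p.inc},
   {q | ∃ p w, LabelOf D p w ∧ q ∈ p.ia},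
   {q | ∃ p w, LabelOf D p w ∧ q ∈ p.tl},
   {q | ∃ p w, LabelOf D p w ∧ q ∈ p.cl}⟩

/-- Every vertex label of the decomposition tree satisfies `P`. -/
inductive AllLabels (P : PreGraph V A L → V → Prop) : DTree V A L → Prop where
  | node (g : PreGraph V A L) (t : V) (cs : List (DTree V A L)) :
      P g t → (∀ c, c ∈ cs → AllLabels P c) → AllLabels P (.node g t cs)

/-- The subtree of a decomposition tree at a given position (a path of child indices). -/
def subtreeAt : List ℕ → DTree V A L → Option (DTree V A L)
  | [], D => some D
  | i :: rest, .node _ _ cs =>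
    match cs[i]? with
    | some c => subtreeAt rest c
    | none => none

/-! ## Patterns and embeddings -/

/-- An embedding of the graph `g` into the graph `p`: an isomorphism preserving arrow indices
and configurator labels, with token labels respecting the subtype relation `le`. -/
def IsEmbedding (le : Set (L × L)) (g p : PreGraph V A L) (fv : V → V) (fa : A → A) : Prop :=
  (∀ x ∈ g.Tk, fv x ∈ p.Tk) ∧ (∀ x ∈ g.Cf, fv x ∈ p.Cf) ∧
  (∀ x ∈ g.Tk ∪ g.Cf, ∀ y ∈ g.Tk ∪ g.Cf, fv x = fv y → x = y) ∧
  (∀ y ∈ p.Tk, ∃ x ∈ g.Tk, fv x = y) ∧ (∀ y ∈ p.Cf, ∃ x ∈ g.Cf, fv x = y) ∧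
  (∀ a ∈ g.Arr, fa a ∈ p.Arr) ∧
  (∀ a ∈ g.Arr, ∀ b ∈ g.Arr, fa a = fa b → a = b) ∧
  (∀ b ∈ p.Arr, ∃ a ∈ g.Arr, fa a = b) ∧
  (∀ a v w, (a, (v, w)) ∈ g.inc → (fa a, (fv v, fv w)) ∈ p.inc) ∧
  (∀ a n, (a, n) ∈ g.ia → (fa a, n) ∈ p.ia) ∧
  (∀ u c, (u, c) ∈ g.cl → (fv u, c) ∈ p.cl) ∧
  (∀ x τ, (x, τ) ∈ g.tl → ∃ σ, (fv x, σ) ∈ p.tl ∧ (τ, σ) ∈ le)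

/-- The construction `(g, t)` matches the pattern `(p, v)`. -/
def MatchesPattern (le : Set (L × L)) (g : PreGraph V A L) (t : V)
    (p : PreGraph V A L) (v : V) : Prop :=
  ∃ fv fa, IsEmbedding le g p fv fa ∧ fv t = v

/-- `Ps` is a pattern space for `Cs`: a construction space over the same type system and
constructor specification such that every construction of `Cs` matches some construction
of `Ps`. -/
def IsPatternSpace (Cs Ps : CSpace V A L) : Prop :=
  Ps.Ty = Cs.Ty ∧ Ps.le = Cs.le ∧ Ps.C = Cs.C ∧ Ps.sig = Cs.sig ∧ IsCSpace Ps ∧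
  ∀ g t, IsConstruction Cs g t →
    ∃ p v, IsConstruction Ps p v ∧ MatchesPattern Cs.le g t p v

/-- Vertex-wise matching of two same-shape decomposition trees under a common pair of maps. -/
inductive DMatches (le : Set (L × L)) (fv : V → V) (fa : A → A) :
    DTree V A L → DTree V A L → Prop where
  | node (g : PreGraph V A L) (t : V) (p : PreGraph V A L) (v : V)
      (cs ds : List (DTree V A L))
      (hemb : IsEmbedding le g p fv fa) (ht : fv t = v)
      (hlen : cs.length = ds.length)
      (hrec : ∀ (i : ℕ) (ci di : DTree V A L), cs[i]? = some ci → ds[i]? = some di →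
          DMatches le fv fa ci di) :
      DMatches le fv fa (.node g t cs) (.node p v ds)

/-- The decomposition `D` matches the (pattern) decomposition `Δ`: there is an arrow-index
preserving isomorphism of trees together with an embedding of `ct(D)` into `ct(Δ)` whose
restriction to each vertex label is an embedding into the corresponding pattern label. -/
def DecompositionMatches (le : Set (L × L)) (D Δ : DTree V A L) : Prop :=
  ∃ fv fa, IsEmbedding le D.ctGraph Δ.ctGraph fv fa ∧ fv D.rootTok = Δ.rootTok ∧
    DMatches le fv fa D Δ

/-! ## Descriptions -/

/-- A description: a set of decompositions of patterns (constructions in the pattern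
space `Ps`). -/
def IsDescriptionOf (Ps : CSpace V A L) (Ds : Set (DTree V A L)) : Prop :=
  ∀ Δ ∈ Ds, ∃ p v, IsConstruction Ps p v ∧ IsDecompositionOf Ps Δ p v

/-- The description `Ds` is complete for `Cs`. -/
def CompleteDescription (Cs : CSpace V A L) (Ds : Set (DTree V A L)) : Prop :=
  ∀ g t, IsConstruction Cs g t →
    ∃ Δ ∈ Ds, ∃ D, IsDecompositionOf Cs D g t ∧ DecompositionMatches Cs.le D Δ

/-- The set of patterns labelling vertices of decompositions in `Ds`. -/
def PatternsOf (Ds : Set (DTree V A L)) : Set (PreGraph V A L × V) :=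
  {pv | ∃ Δ ∈ Ds, LabelOf Δ pv.1 pv.2}

/-- Label-preserving isomorphism of patterns/constructions. -/
def LabelIsomorphic (g : PreGraph V A L) (t : V) (p : PreGraph V A L) (v : V) : Prop :=
  ∃ fv fa, IsEmbedding {q : L × L | q.1 = q.2} g p fv fa ∧ fv t = v

/-- The description `Ds` is compact: finitely many patterns up to label-preserving
isomorphism. -/
def CompactDescription (Ds : Set (DTree V A L)) : Prop :=
  ∃ Reps : Set (PreGraph V A L × V), Reps.Finite ∧
    ∀ pv ∈ PatternsOf Ds, ∃ qw ∈ Reps, LabelIsomorphic pv.1 pv.2 qw.1 qw.2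

/-! ## Transformation constraints and structural transformations -/

/-- A transformation-constraint-shaped triple: two patterns (or constructions) together with
a set of patterns (or constructions). -/
structure TConstraint (V A L : Type*) where
  pa : PreGraph V A L
  ca : V
  pb : PreGraph V A L
  cb : V
  Pc : Set (PreGraph V A L × V)

/-- The union of the graphs of a set of patterns. -/
def pGraph (P : Set (PreGraph V A L × V)) : PreGraph V A L :=
  ⟨{x | ∃ pv ∈ P, x ∈ pv.1.Tk}, {x | ∃ pv ∈ P, x ∈ pv.1.Cf},
   {a | ∃ pv ∈ P, a ∈ pv.1.Arr}, {q | ∃ pv ∈ P, q ∈ pv.1.inc},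
   {q | ∃ pv ∈ P, q ∈ pv.1.ia}, {q | ∃ pv ∈ P, q ∈ pv.1.tl},
   {q | ∃ pv ∈ P, q ∈ pv.1.cl}⟩

/-- A respectful embedding of the set of patterns `P` into the set of patterns `P'`. -/
def RespectfulEmbedding (le : Set (L × L)) (P P' : Set (PreGraph V A L × V))
    (fv : V → V) (fa : A → A) : Prop :=
  IsEmbedding le (pGraph P) (pGraph P') fv fa ∧
  ∀ pv ∈ P, ∃ qw ∈ P', IsEmbedding le pv.1 qw.1 fv fa ∧ fv pv.2 = qw.2

/-- Satisfaction of one transformation-constraint-shaped triple by another: embeddings of the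
first two components, a respectful embedding of the third, whose common underlying maps give
an isomorphism of the unions of the graphs. -/
def TCSatisfies (le : Set (L × L)) (s s' : TConstraint V A L) : Prop :=
  ∃ fv fa,
    IsEmbedding le s.pa s'.pa fv fa ∧ fv s.ca = s'.ca ∧
    IsEmbedding le s.pb s'.pb fv fa ∧ fv s.cb = s'.cb ∧
    RespectfulEmbedding le s.Pc s'.Pc fv fa ∧
    IsEmbedding le ((s.pa ∪ s.pb) ∪ pGraph s.Pc) ((s'.pa ∪ s'.pb) ∪ pGraph s'.Pc) fv fa

/-- A transformation constraint for an encoding described by `(Ds, Ds', P'')`. -/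
def IsTransformationConstraint (Ds Ds' : Set (DTree V A L))
    (P'' : Set (PreGraph V A L × V)) (s : TConstraint V A L) : Prop :=
  (s.pa, s.ca) ∈ PatternsOf Ds ∧ (s.pb, s.cb) ∈ PatternsOf Ds' ∧ s.Pc ⊆ P''

/-- A constraint assignment for `Δ` and `Δ'`: a partial function (modelled with `Option`) on
pairs of vertices (paths) whose values are transformation constraints from `S0` matched by the
corresponding labels. -/
def IsConstraintAssignment (leR leR' : Set (L × L)) (S0 : Set (TConstraint V A L))
    (Δ Δ' : DTree V A L) (Lm : List ℕ → List ℕ → Option (TConstraint V A L)) : Prop :=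
  ∀ pi pi' s, Lm pi pi' = some s → s ∈ S0 ∧
    (∃ δ, subtreeAt pi Δ = some δ ∧
        MatchesPattern leR δ.rootGraph δ.rootTok s.pa s.ca) ∧
    (∃ δ', subtreeAt pi' Δ' = some δ' ∧
        MatchesPattern leR' δ'.rootGraph δ'.rootTok s.pb s.cb)

/-- The constraint assignment `Lm` is satisfied by the pair of decompositions `(D, D')`
(whose vertices correspond, via the shape-preserving matchings, to those of `Δ`, `Δ'`). -/
def LSatisfiedBy (leI : Set (L × L)) (Ip : CSpace V A L)
    (Lm : List ℕ → List ℕ → Option (TConstraint V A L)) (D D' : DTree V A L) : Prop :=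
  ∀ pi pi' s d d', Lm pi pi' = some s →
    subtreeAt pi D = some d → subtreeAt pi' D' = some d' →
    ∃ Cset : Set (PreGraph V A L × V),
      (∀ pv ∈ Cset, IsConstruction Ip pv.1 pv.2) ∧
      TCSatisfies leI ⟨d.rootGraph, d.rootTok, d'.rootGraph, d'.rootTok, Cset⟩ s

/-- `(g', t')` is a structural `L`-transformation of `(g, t)` (with respect to the pattern
decompositions `Δ`, `Δ'` for the universal spaces `Ru`, `Ru'` and the inter-property
identification space `Ip`). -/
def IsStructuralLTransformation (Ru Ru' Ip : CSpace V A L) (Δ Δ' : DTree V A L)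
    (Lm : List ℕ → List ℕ → Option (TConstraint V A L))
    (g : PreGraph V A L) (t : V) (g' : PreGraph V A L) (t' : V) : Prop :=
  (∃ D, IsDecompositionOf Ru D g t ∧ DecompositionMatches Ru.le D Δ) ∧
  (∃ D', IsDecompositionOf Ru' D' g' t' ∧ DecompositionMatches Ru'.le D' Δ') ∧
  ∀ D D', IsDecompositionOf Ru D g t → DecompositionMatches Ru.le D Δ →
    IsDecompositionOf Ru' D' g' t' → DecompositionMatches Ru'.le D' Δ' →
    LSatisfiedBy Ip.le Ip Lm D D'

/-- Partial satisfaction: the constraint is only checked at vertices of the pattern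
decomposition `Δh` whose label is already a construction in `Ru'`. -/
def LPartialSatisfiedBy (leI : Set (L × L)) (Ip Ru' : CSpace V A L)
    (Lm : List ℕ → List ℕ → Option (TConstraint V A L)) (D Δh : DTree V A L) : Prop :=
  ∀ pi pi' s d δh, Lm pi pi' = some s →
    subtreeAt pi D = some d → subtreeAt pi' Δh = some δh →
    IsConstructionIn Ru' δh.rootGraph δh.rootTok →
    ∃ Cset : Set (PreGraph V A L × V),
      (∀ pv ∈ Cset, IsConstruction Ip pv.1 pv.2) ∧
      TCSatisfies leI ⟨d.rootGraph, d.rootTok, δh.rootGraph, δh.rootTok, Cset⟩ s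

/-- The pattern `(ph, vh)` (a construction in the pattern space `Ps'` for `Ru'`) is a partial
`L`-transformation of the construction `(g, t)`. -/
def IsPartialLTransformation (Ru Ru' Ip Ps' : CSpace V A L) (Δ Δ' : DTree V A L)
    (Lm : List ℕ → List ℕ → Option (TConstraint V A L))
    (g : PreGraph V A L) (t : V) (ph : PreGraph V A L) (vh : V) : Prop :=
  (∃ D, IsDecompositionOf Ru D g t ∧ DecompositionMatches Ru.le D Δ) ∧
  (∃ Δh, IsDecompositionOf Ps' Δh ph vh ∧ DecompositionMatches Ru'.le Δh Δ') ∧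
  ∀ D Δh, IsDecompositionOf Ru D g t → DecompositionMatches Ru.le D Δ →
    IsDecompositionOf Ps' Δh ph vh → DecompositionMatches Ru'.le Δh Δ' →
    LPartialSatisfiedBy Ip.le Ip Ru' Lm D Δh

/-! ## Validity, soundness, leaf instantiation -/

/-- Validity of `Lm` for `(g, t)` and `(p, v)` at the pair of vertices `(pi, pi')`. -/
def ValidAt (Ru Ru' Ip Ps' : CSpace V A L) (Δ Δ' : DTree V A L)
    (Lm : List ℕ → List ℕ → Option (TConstraint V A L))
    (g : PreGraph V A L) (t : V) (p : PreGraph V A L) (v : V)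
    (pi pi' : List ℕ) : Prop :=
  ∀ D Δh Dsub Δhsub Δsub Δsub',
    IsDecompositionOf Ru D g t → DecompositionMatches Ru.le D Δ →
    IsDecompositionOf Ps' Δh p v → DecompositionMatches Ru'.le Δh Δ' →
    subtreeAt pi D = some Dsub → subtreeAt pi' Δh = some Δhsub →
    subtreeAt pi Δ = some Δsub → subtreeAt pi' Δ' = some Δsub' →
    IsConstructionIn Ru' Δhsub.ctGraph Δhsub.rootTok →
    IsStructuralLTransformation Ru Ru' Ip Δsub Δsub'
      (fun σ σ' => Lm (pi ++ σ) (pi' ++ σ'))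
      Dsub.ctGraph Dsub.rootTok Δhsub.ctGraph Δhsub.rootTok

/-- Ancestor-validity: validity at every pair of proper descendants-in-the-tree
("ancestors" in the paper's in-tree terminology). -/
def AncestorValidAt (Ru Ru' Ip Ps' : CSpace V A L) (Δ Δ' : DTree V A L)
    (Lm : List ℕ → List ℕ → Option (TConstraint V A L))
    (g : PreGraph V A L) (t : V) (p : PreGraph V A L) (v : V)
    (pi pi' : List ℕ) : Prop :=
  ∀ σ σ' : List ℕ, σ ≠ [] → σ' ≠ [] →
    (∃ d, subtreeAt (pi ++ σ) Δ = some d) → (∃ d', subtreeAt (pi' ++ σ') Δ' = some d') →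
    ValidAt Ru Ru' Ip Ps' Δ Δ' Lm g t p v (pi ++ σ) (pi' ++ σ')

/-- Soundness of a constraint assignment. -/
def SoundAssignment (Ru Ru' Ip Ps' : CSpace V A L) (Δ Δ' : DTree V A L)
    (Lm : List ℕ → List ℕ → Option (TConstraint V A L)) : Prop :=
  ∀ g t, IsConstructionIn Ru g t →
    (∃ D, IsDecompositionOf Ru D g t ∧ DecompositionMatches Ru.le D Δ) →
    ∀ p v, IsConstruction Ps' p v →
      (∃ Δh, IsDecompositionOf Ps' Δh p v ∧ DecompositionMatches Ru'.le Δh Δ') →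
      ∀ pi pi', (∃ d, subtreeAt pi Δ = some d) → (∃ d', subtreeAt pi' Δ' = some d') →
        AncestorValidAt Ru Ru' Ip Ps' Δ Δ' Lm g t p v pi pi' →
        ValidAt Ru Ru' Ip Ps' Δ Δ' Lm g t p v pi pi'

/-- The pattern `(p, v)` leaf-instantiates `Δ'`: it matches `Δ'` and every leaf of its
`Δ'`-canonical decomposition is labelled by a construction in `Ru'`. -/
def LeafInstantiates (Ru' Ps' : CSpace V A L) (Δ' : DTree V A L)
    (p : PreGraph V A L) (v : V) : Prop :=
  (∃ Δh, IsDecompositionOf Ps' Δh p v ∧ DecompositionMatches Ru'.le Δh Δ') ∧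
  ∀ Δh, IsDecompositionOf Ps' Δh p v → DecompositionMatches Ru'.le Δh Δ' →
    ∀ pi δh, subtreeAt pi Δh = some δh → δh.kids = [] →
      IsConstructionIn Ru' δh.rootGraph δh.rootTok

/-- A complete extension of a pattern `(p, v)` that leaf-instantiates `Δ'`. -/
def CompleteExtension (Ru' Ps' : CSpace V A L) (Δ' : DTree V A L)
    (p : PreGraph V A L) (v : V) (g' : PreGraph V A L) (t' : V) : Prop :=
  IsConstructionIn Ru' g' t' ∧
  ∃ fv fa, IsEmbedding Ru'.le g' p fv fa ∧ fv t' = v ∧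
    ∀ Δh, IsDecompositionOf Ps' Δh p v → DecompositionMatches Ru'.le Δh Δ' →
      ∀ pi δh, subtreeAt pi Δh = some δh → δh.kids = [] →
        ∀ x ∈ δh.rootGraph.Tk, x ∈ g'.Tk ∧ fv x = x

/-- `(g, t)` and `(p, v)` are valid at the leaves of `Δ` and `Δ'`. -/
def ValidAtLeaves (Ru Ru' Ip Ps' : CSpace V A L) (Δ Δ' : DTree V A L)
    (Lm : List ℕ → List ℕ → Option (TConstraint V A L))
    (g : PreGraph V A L) (t : V) (p : PreGraph V A L) (v : V) : Prop :=
  ∀ pi pi' δ δ', subtreeAt pi Δ = some δ → subtreeAt pi' Δ' = some δ' →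
    δ.kids = [] → δ'.kids = [] →
    ValidAt Ru Ru' Ip Ps' Δ Δ' Lm g t p v pi pi'


/-!
Apart from the identification space, every component of the combined system is inherited from
`R ∪ R'` or from the encoding. The one real step is that three pairwise compatible construction
spaces have a construction space as their union. The order, functionality and disjointness
conditions only involve two items at a time, so they hold already in a pairwise union. For the
structure-graph condition, the neighbourhood of a configurator `u` in the triple union is its
neighbourhood in a pairwise union `P` containing `u`. Every arrow at `u` is the output arrow or
the input arrow of some index, and any two arrows of the triple union lie in a common pairwise
union, where the configuration of `u` allows only one arrow in each role.
-/

lemma mem_pair_union {α β : Type*} {s₁ s₂ s₃ : Set α} {t₁ t₂ t₃ : Set β} {a : α} {b : β}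
    (ha : a ∈ s₁ ∪ (s₂ ∪ s₃)) (hb : b ∈ t₁ ∪ (t₂ ∪ t₃)) :
    (a ∈ s₁ ∪ s₂ ∧ b ∈ t₁ ∪ t₂) ∨ (a ∈ s₁ ∪ s₃ ∧ b ∈ t₁ ∪ t₃) ∨
      (a ∈ s₂ ∪ s₃ ∧ b ∈ t₂ ∪ t₃) := by
  simp only [Set.mem_union] at *
  tauto

lemma union_pair_subset {α : Type*} (s₁ s₂ s₃ : Set α) :
    s₁ ∪ s₂ ⊆ s₁ ∪ (s₂ ∪ s₃) ∧ s₁ ∪ s₃ ⊆ s₁ ∪ (s₂ ∪ s₃) ∧ s₂ ∪ s₃ ⊆ s₁ ∪ (s₂ ∪ s₃) :=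
  ⟨Set.union_subset_union_right _ Set.subset_union_left,
    Set.union_subset_union_right _ Set.subset_union_right, Set.subset_union_right⟩

lemma IsFunctionOn.unique {α β : Type*} {R : Set (α × β)} {D : Set α} (h : IsFunctionOn R D)
    {x : α} {y y' : β} (hy : (x, y) ∈ R) (hy' : (x, y') ∈ R) : y = y' :=
  (h.2 x (h.1 _ hy)).unique hy hy'

lemma IsFunctionOn.mem_of_subset {α β : Type*} {R R' : Set (α × β)} {D D' : Set α}
    (h : IsFunctionOn R D) (h' : IsFunctionOn R' D') (hR : R ⊆ R') {x : α} {y : β}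
    (hx : x ∈ D) (hxy : (x, y) ∈ R') : (x, y) ∈ R := by
  obtain ⟨z, hz, -⟩ := h.2 x hx
  rwa [h'.unique hxy (hR hz)]

lemma isFunctionOn_iff {α β : Type*} {R : Set (α × β)} {D : Set α} :
    IsFunctionOn R D ↔ (∀ p ∈ R, p.1 ∈ D) ∧ (∀ x ∈ D, ∃ y, (x, y) ∈ R) ∧
      ∀ x y y', (x, y) ∈ R → (x, y') ∈ R → y = y' := by
  refine ⟨fun h => ⟨h.1, fun x hx => (h.2 x hx).exists, fun _ _ _ => h.unique⟩,
    fun ⟨hdom, hex, huniq⟩ => ⟨hdom, fun x hx => ?_⟩⟩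
  obtain ⟨y, hy⟩ := hex x hx
  exact ⟨y, hy, fun y' hy' => huniq x y' y hy' hy⟩

section PairwiseUnion

variable {α β : Type*} {s₁ s₂ s₃ t₁ t₂ t₃ : Set α}

lemma IsFunctionOn.union3 {R₁ R₂ R₃ : Set (α × β)}
    (h₁₂ : IsFunctionOn (R₁ ∪ R₂) (s₁ ∪ s₂)) (h₁₃ : IsFunctionOn (R₁ ∪ R₃) (s₁ ∪ s₃))
    (h₂₃ : IsFunctionOn (R₂ ∪ R₃) (s₂ ∪ s₃)) :
    IsFunctionOn (R₁ ∪ (R₂ ∪ R₃)) (s₁ ∪ (s₂ ∪ s₃)) := by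
  obtain ⟨s₁₂, s₁₃, s₂₃⟩ := union_pair_subset s₁ s₂ s₃
  obtain ⟨R₁₂, R₁₃, R₂₃⟩ := union_pair_subset R₁ R₂ R₃
  rw [isFunctionOn_iff] at *
  refine ⟨fun p hp => ?_, fun x hx => ?_, fun x y y' hy hy' => ?_⟩
  · rcases mem_pair_union hp hp with ⟨hp, -⟩ | ⟨hp, -⟩ | ⟨hp, -⟩
    exacts [s₁₂ (h₁₂.1 p hp), s₁₃ (h₁₃.1 p hp), s₂₃ (h₂₃.1 p hp)]
  · rcases mem_pair_union hx hx with ⟨hx, -⟩ | ⟨hx, -⟩ | ⟨hx, -⟩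
    exacts [(h₁₂.2.1 x hx).imp fun _ => @R₁₂ _, (h₁₃.2.1 x hx).imp fun _ => @R₁₃ _,
      (h₂₃.2.1 x hx).imp fun _ => @R₂₃ _]
  · rcases mem_pair_union hy hy' with ⟨hy, hy'⟩ | ⟨hy, hy'⟩ | ⟨hy, hy'⟩
    exacts [h₁₂.2.2 x y y' hy hy', h₁₃.2.2 x y y' hy hy', h₂₃.2.2 x y y' hy hy']

lemma disjoint_union3 (h₁₂ : Disjoint (s₁ ∪ s₂) (t₁ ∪ t₂)) (h₁₃ : Disjoint (s₁ ∪ s₃) (t₁ ∪ t₃))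
    (h₂₃ : Disjoint (s₂ ∪ s₃) (t₂ ∪ t₃)) : Disjoint (s₁ ∪ (s₂ ∪ s₃)) (t₁ ∪ (t₂ ∪ t₃)) := by
  rw [Set.disjoint_left] at *
  intro x hs ht
  rcases mem_pair_union hs ht with ⟨hs, ht⟩ | ⟨hs, ht⟩ | ⟨hs, ht⟩
  exacts [h₁₂ hs ht, h₁₃ hs ht, h₂₃ hs ht]

lemma IsPartialOrderOn.union3 {le₁ le₂ le₃ : Set (α × α)}
    (h₁₂ : IsPartialOrderOn (s₁ ∪ s₂) (le₁ ∪ le₂)) (h₁₃ : IsPartialOrderOn (s₁ ∪ s₃) (le₁ ∪ le₃))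
    (h₂₃ : IsPartialOrderOn (s₂ ∪ s₃) (le₂ ∪ le₃)) :
    IsPartialOrderOn (s₁ ∪ (s₂ ∪ s₃)) (le₁ ∪ (le₂ ∪ le₃)) := by
  obtain ⟨s₁₂, s₁₃, s₂₃⟩ := union_pair_subset s₁ s₂ s₃
  obtain ⟨le₁₂, le₁₃, le₂₃⟩ := union_pair_subset le₁ le₂ le₃
  refine ⟨fun p hp => ?_, fun τ hτ => ?_, fun a b hab hba => ?_, fun a b c hab hbc => ?_⟩
  · rcases mem_pair_union hp hp with ⟨hp, -⟩ | ⟨hp, -⟩ | ⟨hp, -⟩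
    exacts [(h₁₂.1 p hp).imp (@s₁₂ _) (@s₁₂ _), (h₁₃.1 p hp).imp (@s₁₃ _) (@s₁₃ _),
      (h₂₃.1 p hp).imp (@s₂₃ _) (@s₂₃ _)]
  · rcases mem_pair_union hτ hτ with ⟨hτ, -⟩ | ⟨hτ, -⟩ | ⟨hτ, -⟩
    exacts [le₁₂ (h₁₂.2.1 τ hτ), le₁₃ (h₁₃.2.1 τ hτ), le₂₃ (h₂₃.2.1 τ hτ)]
  · rcases mem_pair_union hab hba with ⟨hab, hba⟩ | ⟨hab, hba⟩ | ⟨hab, hba⟩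
    exacts [h₁₂.2.2.1 a b hab hba, h₁₃.2.2.1 a b hab hba, h₂₃.2.2.1 a b hab hba]
  · rcases mem_pair_union hab hbc with ⟨hab, hbc⟩ | ⟨hab, hbc⟩ | ⟨hab, hbc⟩
    exacts [le₁₂ (h₁₂.2.2.2 a b c hab hbc), le₁₃ (h₁₃.2.2.2 a b c hab hbc),
      le₂₃ (h₂₃.2.2.2 a b c hab hbc)]

end PairwiseUnion

section Graphs

variable {g h : PreGraph V A L} {u v w w' : V} {a b : A}

lemma IsGraph.mem_Arr_of_inc (hg : IsGraph g) {p : V × V} (ha : (a, p) ∈ g.inc) : a ∈ g.Arr :=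
  hg.2.1.1 _ ha

lemma IsGraph.out_ends (hg : IsGraph g) (ha : (a, (u, w)) ∈ g.inc) (hu : u ∉ g.Tk) :
    u ∈ g.Cf ∧ w ∈ g.Tk :=
  (hg.2.2.1 a u w ha).resolve_left fun h => hu h.1

lemma IsGraph.in_ends (hg : IsGraph g) (ha : (a, (w, u)) ∈ g.inc) (hu : u ∉ g.Tk) :
    w ∈ g.Tk ∧ u ∈ g.Cf :=
  (hg.2.2.1 a w u ha).resolve_right fun h => hu h.2

lemma IsGraph.not_mem_Tk (hg : IsGraph g) (hu : u ∈ g.Cf) : u ∉ g.Tk :=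
  fun hu' => Set.disjoint_left.mp hg.1 hu' hu

lemma PreGraph.Subgraph.not_mem_Tk (hhg : h.Subgraph g) (hg : IsGraph g) (hu : u ∈ g.Cf) :
    u ∉ h.Tk :=
  fun hu' => hg.not_mem_Tk hu (hhg.1 hu')

lemma IsGraph.mem_Tk_of_mem_adjTo (hg : IsGraph g) (hu : u ∈ g.Cf) (hv : v ∈ g.adjTo u)
    (hvu : v ≠ u) : v ∈ g.Tk := by
  rcases hv with rfl | ⟨a, -, hin | hout⟩
  · exact absurd rfl hvu
  · exact (hg.in_ends hin (hg.not_mem_Tk hu)).1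
  · exact (hg.out_ends hout (hg.not_mem_Tk hu)).2

lemma PreGraph.Subgraph.inc_mem (hhg : h.Subgraph g) (hg : IsGraph g) (hh : IsGraph h)
    {p : V × V} (ha : a ∈ h.Arr) (hp : (a, p) ∈ g.inc) : (a, p) ∈ h.inc :=
  hh.2.1.mem_of_subset hg.2.1 hhg.2.2.2.1 ha hp

lemma PreGraph.Subgraph.incidentArrows_eq (hhg : h.Subgraph g) (hg : IsGraph g) (hh : IsGraph h)
    (harr : g.incidentArrows u ⊆ h.Arr) : g.incidentArrows u = h.incidentArrows u := by
  ext a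
  refine ⟨fun ha => ?_,
    fun ⟨ha, v, hv⟩ => ⟨hhg.2.2.1 ha, v, hv.imp (@hhg.2.2.2.1 _) (@hhg.2.2.2.1 _)⟩⟩
  have hah := harr ha
  obtain ⟨-, v, hv⟩ := ha
  exact ⟨hah, v, hv.imp (hhg.inc_mem hg hh hah) (hhg.inc_mem hg hh hah)⟩

lemma PreGraph.Subgraph.adjTo_eq (hhg : h.Subgraph g) (hg : IsGraph g) (hh : IsGraph h)
    (harr : g.incidentArrows u ⊆ h.Arr) : g.adjTo u = h.adjTo u := by
  ext v
  refine or_congr Iff.rfl ⟨fun ⟨a, ha, hv⟩ => ?_, fun ⟨a, ha, hv⟩ => ?_⟩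
  · have hah : a ∈ h.Arr := harr ⟨ha, v, hv⟩
    exact ⟨a, hah, hv.imp (hhg.inc_mem hg hh hah) (hhg.inc_mem hg hh hah)⟩
  · exact ⟨a, hhg.2.2.1 ha, hv.imp (@hhg.2.2.2.1 _) (@hhg.2.2.2.1 _)⟩

theorem PreGraph.Subgraph.Nh_eq (hhg : h.Subgraph g) (hg : IsGraph g) (hh : IsGraph h)
    (hu : u ∈ h.Cf) (harr : g.incidentArrows u ⊆ h.Arr) : g.Nh u = h.Nh u := by
  have Tk_mem : ∀ x ∈ h.adjTo u, x ∈ g.Tk → x ∈ h.Tk := by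
    intro x hx hxg
    by_cases hxu : x = u
    · exact absurd (hxu ▸ hxg) (hg.not_mem_Tk (hhg.2.1 hu))
    · exact hh.mem_Tk_of_mem_adjTo hu hx hxu
  have Cf_mem : ∀ x ∈ h.adjTo u, x ∈ g.Cf → x ∈ h.Cf := by
    intro x hx hxg
    by_cases hxu : x = u
    · exact hxu ▸ hu
    · exact absurd (hhg.1 (hh.mem_Tk_of_mem_adjTo hu hx hxu)) (hg.not_mem_Tk hxg)
  simp only [PreGraph.Nh, PreGraph.restrict, hhg.adjTo_eq hg hh harr,
    hhg.incidentArrows_eq hg hh harr]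
  obtain ⟨hTk, hCf, hArr, hinc, hia, htl, hcl⟩ := hhg
  congr 1
  · ext x
    exact ⟨fun ⟨hx, hxu⟩ => ⟨Tk_mem x hxu hx, hxu⟩, fun ⟨hx, hxu⟩ => ⟨hTk hx, hxu⟩⟩
  · ext x
    exact ⟨fun ⟨hx, hxu⟩ => ⟨Cf_mem x hxu hx, hxu⟩, fun ⟨hx, hxu⟩ => ⟨hCf hx, hxu⟩⟩
  · ext a
    exact ⟨fun ⟨_, ha⟩ => ⟨ha.1, ha⟩, fun ⟨ha, hau⟩ => ⟨hArr ha, hau⟩⟩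
  · ext q
    exact ⟨fun ⟨hq, hqu⟩ => ⟨hh.2.1.mem_of_subset hg.2.1 hinc hqu.1 hq, hqu⟩,
      fun ⟨hq, hqu⟩ => ⟨hinc hq, hqu⟩⟩
  · ext q
    exact ⟨fun ⟨hq, hqu⟩ => ⟨hh.2.2.2.1.mem_of_subset hg.2.2.2.1 hia hqu.1 hq, hqu⟩,
      fun ⟨hq, hqu⟩ => ⟨hia hq, hqu⟩⟩
  · ext q
    refine ⟨fun ⟨hq, hqu⟩ => ⟨?_, hqu⟩, fun ⟨hq, hqu⟩ => ⟨htl hq, hqu⟩⟩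
    exact hh.2.2.2.2.1.mem_of_subset hg.2.2.2.2.1 htl
      (Tk_mem _ hqu (hg.2.2.2.2.1.1 _ hq)) hq
  · ext q
    refine ⟨fun ⟨hq, hqu⟩ => ⟨?_, hqu⟩, fun ⟨hq, hqu⟩ => ⟨hcl hq, hqu⟩⟩
    exact hh.2.2.2.2.2.mem_of_subset hg.2.2.2.2.2 hcl
      (Cf_mem _ hqu (hg.2.2.2.2.2.1 _ hq)) hq

end Graphs

section Configurations

variable {Ty : Set L} {le le' : Set (L × L)} {C : Set L} {sig : Set (L × (List L × L))}
  {g : PreGraph V A L} {u w w' : V} {c : L} {ins : List L} {out : L} {a b : A} {ars : List A}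

lemma IsConfiguration.mono (hle : le ⊆ le') (h : IsConfiguration le g u c ins out) :
    IsConfiguration le' g u c ins out := by
  obtain ⟨h₁, h₂, h₃, h₄, h₅, hout, ars, hars, hlen, hin⟩ := h
  refine ⟨h₁, h₂, h₃, h₄, h₅, fun a₀ ha₀ w hw => ?_, ars, hars, hlen, fun i a τ hi hτ => ?_⟩
  · obtain ⟨h0, σ, hσ, hσout⟩ := hout a₀ ha₀ w hw
    exact ⟨h0, σ, hσ, hle hσout⟩
  · obtain ⟨w, σ, hw, hσ, hστ⟩ := hin i a τ hi hτ
    exact ⟨w, σ, hw, hσ, hle hστ⟩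

lemma IsConfiguration.exists_out_arrow (h : IsConfiguration le (g.Nh u) u c ins out) :
    ∃ a w, (a, (u, w)) ∈ g.inc := by
  obtain ⟨a, ⟨-, w, haw, -⟩, -⟩ := h.2.2.2.2.1
  exact ⟨a, w, haw⟩

lemma InArrowSeq.exists_getElem_eq (h : InArrowSeq (g.Nh u) u ars) (ha : a ∈ g.Arr)
    (hau : (a, (w, u)) ∈ g.inc) :
    ∃ (i : ℕ) (hi : i < ars.length), ars[i] = a ∧ (a, i + 1) ∈ g.ia := by
  have hai : a ∈ g.incidentArrows u := ⟨ha, w, .inl hau⟩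
  obtain ⟨i, hi, rfl⟩ := List.mem_iff_getElem.mp ((h.2.1 a).mpr ⟨⟨ha, hai⟩, w, hau, hai⟩)
  exact ⟨i, hi, rfl, (h.2.2 i _ (List.getElem?_eq_getElem hi)).1⟩

lemma IsConfiguration.exists_in_arrow (h : IsConfiguration le (g.Nh u) u c ins out) {i : ℕ}
    (hi : i < ins.length) : ∃ a w, (a, (w, u)) ∈ g.inc ∧ (a, i + 1) ∈ g.ia := by
  obtain ⟨ars, hars, hlen, -⟩ := h.2.2.2.2.2.2
  have hi' : i < ars.length := hlen ▸ hi
  obtain ⟨-, w, hw, -⟩ := (hars.2.1 ars[i]).mp (List.getElem_mem hi')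
  exact ⟨ars[i], w, hw, (hars.2.2 i _ (List.getElem?_eq_getElem hi')).1⟩

lemma IsStructureGraph.out_arrow_unique (hg : IsStructureGraph Ty le C sig g) (hu : u ∈ g.Cf)
    (hau : (a, (u, w)) ∈ g.inc) (hbu : (b, (u, w')) ∈ g.inc) : a = b := by
  obtain ⟨c, ins, out, -, -, -, hc⟩ := hg.2.2 u hu
  obtain ⟨a₀, -, huniq⟩ := hc.2.2.2.2.1
  have ha := hg.1.mem_Arr_of_inc hau
  have hb := hg.1.mem_Arr_of_inc hbu
  have hai : a ∈ g.incidentArrows u := ⟨ha, w, .inr hau⟩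
  have hbi : b ∈ g.incidentArrows u := ⟨hb, w', .inr hbu⟩
  exact (huniq a ⟨⟨ha, hai⟩, w, hau, hai⟩).trans (huniq b ⟨⟨hb, hbi⟩, w', hbu, hbi⟩).symm

lemma IsStructureGraph.in_arrow_unique (hg : IsStructureGraph Ty le C sig g) (hu : u ∈ g.Cf)
    (hau : (a, (w, u)) ∈ g.inc) (hbu : (b, (w', u)) ∈ g.inc) {m : ℕ} (ham : (a, m) ∈ g.ia)
    (hbm : (b, m) ∈ g.ia) : a = b := by
  obtain ⟨c, ins, out, -, -, -, hc⟩ := hg.2.2 u hu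
  obtain ⟨ars, hars, -, -⟩ := hc.2.2.2.2.2.2
  obtain ⟨i, hi, rfl, hai⟩ := hars.exists_getElem_eq (hg.1.mem_Arr_of_inc hau) hau
  obtain ⟨j, hj, rfl, hbj⟩ := hars.exists_getElem_eq (hg.1.mem_Arr_of_inc hbu) hbu
  have hia := hg.1.2.2.2.1
  have hij : i = j := by
    have := hia.unique hai ham
    have := hia.unique hbj hbm
    omega
  subst hij
  rfl

lemma IsStructureGraph.exists_index_of_in_arrow (hg : IsStructureGraph Ty le C sig g)
    (hu : u ∈ g.Cf) (hau : (a, (w, u)) ∈ g.inc) :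
    ∃ c ins out, (u, c) ∈ g.cl ∧ (c, (ins, out)) ∈ sig ∧ ∃ i < ins.length, (a, i + 1) ∈ g.ia := by
  obtain ⟨c, ins, out, hc, -, hsig, hconf⟩ := hg.2.2 u hu
  obtain ⟨ars, hars, hlen, -⟩ := hconf.2.2.2.2.2.2
  obtain ⟨i, hi, -, hai⟩ := hars.exists_getElem_eq (hg.1.mem_Arr_of_inc hau) hau
  exact ⟨c, ins, out, hc, hsig, i, hlen ▸ hi, hai⟩

end Configurations

structure CSpace.Subspace (P Q : CSpace V A L) : Prop where
  Ty : P.Ty ⊆ Q.Ty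
  le : P.le ⊆ Q.le
  C : P.C ⊆ Q.C
  sig : P.sig ⊆ Q.sig
  G : P.G.Subgraph Q.G

def IncPairwiseCovered (Q : CSpace V A L) : Prop :=
  ∀ p ∈ Q.G.inc, ∀ p' ∈ Q.G.inc, ∃ P, P.Subspace Q ∧ IsCSpace P ∧ p ∈ P.G.inc ∧ p' ∈ P.G.inc

namespace IncPairwiseCovered

variable {P Q : CSpace V A L} {u w w' : V} {a b : A}

lemma out_arrow_unique (hcov : IncPairwiseCovered Q) (hQ : IsGraph Q.G) (hu : u ∈ Q.G.Cf)
    (hau : (a, (u, w)) ∈ Q.G.inc) (hbu : (b, (u, w')) ∈ Q.G.inc) : a = b := by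
  obtain ⟨P, hPQ, ⟨-, -, -, -, hPS⟩, hau, hbu⟩ := hcov _ hau _ hbu
  have huP : u ∈ P.G.Cf := (hPS.1.out_ends hau (hPQ.G.not_mem_Tk hQ hu)).1
  exact hPS.out_arrow_unique huP hau hbu

lemma in_arrow_unique (hcov : IncPairwiseCovered Q) (hQ : IsGraph Q.G) (hu : u ∈ Q.G.Cf)
    (hau : (a, (w, u)) ∈ Q.G.inc) (hbu : (b, (w', u)) ∈ Q.G.inc) {m : ℕ}
    (ham : (a, m) ∈ Q.G.ia) (hbm : (b, m) ∈ Q.G.ia) : a = b := by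
  obtain ⟨P, hPQ, ⟨-, -, -, -, hPS⟩, hau, hbu⟩ := hcov _ hau _ hbu
  have huP : u ∈ P.G.Cf := (hPS.1.in_ends hau (hPQ.G.not_mem_Tk hQ hu)).2
  have ia_mem : ∀ {x}, (x, m) ∈ Q.G.ia → x ∈ P.G.Arr → (x, m) ∈ P.G.ia :=
    fun hx hxP => hPS.1.2.2.2.1.mem_of_subset hQ.2.2.2.1 hPQ.G.2.2.2.2.1 hxP hx
  exact hPS.in_arrow_unique huP hau hbu (ia_mem ham (hPS.1.mem_Arr_of_inc hau))
    (ia_mem hbm (hPS.1.mem_Arr_of_inc hbu))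

lemma exists_index_of_in_arrow (hcov : IncPairwiseCovered Q) (hQ : IsGraph Q.G)
    (hu : u ∈ Q.G.Cf) (hau : (a, (w, u)) ∈ Q.G.inc) :
    ∃ c ins out, (u, c) ∈ Q.G.cl ∧ (c, (ins, out)) ∈ Q.sig ∧
      ∃ i < ins.length, (a, i + 1) ∈ Q.G.ia := by
  obtain ⟨P, hPQ, ⟨-, -, -, -, hPS⟩, hau, -⟩ := hcov _ hau _ hau
  have huP : u ∈ P.G.Cf := (hPS.1.in_ends hau (hPQ.G.not_mem_Tk hQ hu)).2
  obtain ⟨c, ins, out, hc, hsig, i, hi, hai⟩ := hPS.exists_index_of_in_arrow huP hau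
  exact ⟨c, ins, out, hPQ.G.2.2.2.2.2.2 hc, hPQ.sig hsig, i, hi, hPQ.G.2.2.2.2.1 hai⟩

/-- Each arrow at `u` has a role (output, or input of some index) that the configuration of `u`
in `P` already fills, and in `Q` that role is filled by only one arrow. -/
lemma incidentArrows_subset (hcov : IncPairwiseCovered Q) (hQ : IsGraph Q.G)
    (hsig : IsFunctionOn Q.sig Q.C) (hPQ : P.Subspace Q)
    (hP : IsStructureGraph P.Ty P.le P.C P.sig P.G) (hu : u ∈ P.G.Cf) :
    Q.G.incidentArrows u ⊆ P.G.Arr := by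
  obtain ⟨hPG, -, hPconf⟩ := hP
  have huQ : u ∈ Q.G.Cf := hPQ.G.2.1 hu
  obtain ⟨c, ins, out, hc, -, hcsig, hconf⟩ := hPconf u hu
  rintro a ⟨-, v, hin | hout⟩
  · obtain ⟨c', ins', out', hc', hsig', i, hi, hai⟩ := hcov.exists_index_of_in_arrow hQ huQ hin
    obtain rfl : c' = c := hQ.2.2.2.2.2.unique hc' (hPQ.G.2.2.2.2.2.2 hc)
    obtain rfl : ins' = ins := congrArg Prod.fst (hsig.unique hsig' (hPQ.sig hcsig))
    obtain ⟨b, w, hbw, hbi⟩ := hconf.exists_in_arrow hi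
    rw [hcov.in_arrow_unique hQ huQ hin (hPQ.G.2.2.2.1 hbw) hai (hPQ.G.2.2.2.2.1 hbi)]
    exact hPG.mem_Arr_of_inc hbw
  · obtain ⟨b, w, hbw⟩ := hconf.exists_out_arrow
    rw [hcov.out_arrow_unique hQ huQ hout (hPQ.G.2.2.2.1 hbw)]
    exact hPG.mem_Arr_of_inc hbw

theorem isStructureGraph (hcov : IncPairwiseCovered Q) (hQ : IsGraph Q.G)
    (hsig : IsFunctionOn Q.sig Q.C) (htl : ∀ x τ, (x, τ) ∈ Q.G.tl → τ ∈ Q.Ty)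
    (hCf : ∀ u ∈ Q.G.Cf, ∃ P, P.Subspace Q ∧ IsCSpace P ∧ u ∈ P.G.Cf) :
    IsStructureGraph Q.Ty Q.le Q.C Q.sig Q.G := by
  refine ⟨hQ, htl, fun u hu => ?_⟩
  obtain ⟨P, hPQ, ⟨-, -, -, -, hP⟩, huP⟩ := hCf u hu
  obtain ⟨c, ins, out, hc, hcC, hcsig, hconf⟩ := hP.2.2 u huP
  refine ⟨c, ins, out, hPQ.G.2.2.2.2.2.2 hc, hPQ.C hcC, hPQ.sig hcsig, ?_⟩
  rw [hPQ.G.Nh_eq hQ hP.1 huP (hcov.incidentArrows_subset hQ hsig hPQ hP huP)]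
  exact hconf.mono hPQ.le

end IncPairwiseCovered

section Union3

lemma PreGraph.subgraph_union3 (g₁ g₂ g₃ : PreGraph V A L) :
    (g₁ ∪ g₂).Subgraph (g₁ ∪ (g₂ ∪ g₃)) ∧ (g₁ ∪ g₃).Subgraph (g₁ ∪ (g₂ ∪ g₃)) ∧
      (g₂ ∪ g₃).Subgraph (g₁ ∪ (g₂ ∪ g₃)) := by
  refine ⟨⟨?_, ?_, ?_, ?_, ?_, ?_, ?_⟩, ⟨?_, ?_, ?_, ?_, ?_, ?_, ?_⟩, ⟨?_, ?_, ?_, ?_, ?_, ?_, ?_⟩⟩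
  all_goals first
    | exact (union_pair_subset _ _ _).1
    | exact (union_pair_subset _ _ _).2.1
    | exact (union_pair_subset _ _ _).2.2

lemma IsGraph.union3 {g₁ g₂ g₃ : PreGraph V A L} (h₁₂ : IsGraph (g₁ ∪ g₂))
    (h₁₃ : IsGraph (g₁ ∪ g₃)) (h₂₃ : IsGraph (g₂ ∪ g₃)) : IsGraph (g₁ ∪ (g₂ ∪ g₃)) := by
  obtain ⟨s₁₂, s₁₃, s₂₃⟩ := PreGraph.subgraph_union3 g₁ g₂ g₃
  refine ⟨disjoint_union3 h₁₂.1 h₁₃.1 h₂₃.1, h₁₂.2.1.union3 h₁₃.2.1 h₂₃.2.1,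
    fun a v w ha => ?_, h₁₂.2.2.2.1.union3 h₁₃.2.2.2.1 h₂₃.2.2.2.1,
    h₁₂.2.2.2.2.1.union3 h₁₃.2.2.2.2.1 h₂₃.2.2.2.2.1,
    h₁₂.2.2.2.2.2.union3 h₁₃.2.2.2.2.2 h₂₃.2.2.2.2.2⟩
  have lift : ∀ {g : PreGraph V A L}, g.Subgraph (g₁ ∪ (g₂ ∪ g₃)) →
      (v ∈ g.Tk ∧ w ∈ g.Cf) ∨ (v ∈ g.Cf ∧ w ∈ g.Tk) →
      (v ∈ (g₁ ∪ (g₂ ∪ g₃)).Tk ∧ w ∈ (g₁ ∪ (g₂ ∪ g₃)).Cf) ∨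
        (v ∈ (g₁ ∪ (g₂ ∪ g₃)).Cf ∧ w ∈ (g₁ ∪ (g₂ ∪ g₃)).Tk) :=
    fun hs => Or.imp (And.imp (@hs.1 _) (@hs.2.1 _)) (And.imp (@hs.2.1 _) (@hs.1 _))
  rcases mem_pair_union ha ha with ⟨ha, -⟩ | ⟨ha, -⟩ | ⟨ha, -⟩
  exacts [lift s₁₂ (h₁₂.2.2.1 a v w ha), lift s₁₃ (h₁₃.2.2.1 a v w ha),
    lift s₂₃ (h₂₃.2.2.1 a v w ha)]

lemma CSpace.subspace_union3 (c₁ c₂ c₃ : CSpace V A L) :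
    (c₁ ∪ c₂).Subspace (c₁ ∪ (c₂ ∪ c₃)) ∧ (c₁ ∪ c₃).Subspace (c₁ ∪ (c₂ ∪ c₃)) ∧
      (c₂ ∪ c₃).Subspace (c₁ ∪ (c₂ ∪ c₃)) := by
  obtain ⟨s₁₂, s₁₃, s₂₃⟩ := PreGraph.subgraph_union3 c₁.G c₂.G c₃.G
  obtain ⟨Ty₁₂, Ty₁₃, Ty₂₃⟩ := union_pair_subset c₁.Ty c₂.Ty c₃.Ty
  obtain ⟨le₁₂, le₁₃, le₂₃⟩ := union_pair_subset c₁.le c₂.le c₃.le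
  obtain ⟨C₁₂, C₁₃, C₂₃⟩ := union_pair_subset c₁.C c₂.C c₃.C
  obtain ⟨sig₁₂, sig₁₃, sig₂₃⟩ := union_pair_subset c₁.sig c₂.sig c₃.sig
  exact ⟨⟨Ty₁₂, le₁₂, C₁₂, sig₁₂, s₁₂⟩, ⟨Ty₁₃, le₁₃, C₁₃, sig₁₃, s₁₃⟩,
    ⟨Ty₂₃, le₂₃, C₂₃, sig₂₃, s₂₃⟩⟩

variable {c₁ c₂ c₃ : CSpace V A L}

lemma exists_subspace_of_mem_union3 (h₁₂ : IsCSpace (c₁ ∪ c₂)) (h₁₃ : IsCSpace (c₁ ∪ c₃))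
    (h₂₃ : IsCSpace (c₂ ∪ c₃)) {α : Type*} (f : CSpace V A L → Set α)
    (hf : ∀ c d, f (c ∪ d) = f c ∪ f d) {x y : α} (hx : x ∈ f (c₁ ∪ (c₂ ∪ c₃)))
    (hy : y ∈ f (c₁ ∪ (c₂ ∪ c₃))) :
    ∃ P, P.Subspace (c₁ ∪ (c₂ ∪ c₃)) ∧ IsCSpace P ∧ x ∈ f P ∧ y ∈ f P := by
  obtain ⟨s₁₂, s₁₃, s₂₃⟩ := CSpace.subspace_union3 c₁ c₂ c₃
  simp only [hf] at hx hy
  rcases mem_pair_union hx hy with ⟨hx, hy⟩ | ⟨hx, hy⟩ | ⟨hx, hy⟩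
  · exact ⟨_, s₁₂, h₁₂, hf _ _ ▸ hx, hf _ _ ▸ hy⟩
  · exact ⟨_, s₁₃, h₁₃, hf _ _ ▸ hx, hf _ _ ▸ hy⟩
  · exact ⟨_, s₂₃, h₂₃, hf _ _ ▸ hx, hf _ _ ▸ hy⟩

theorem isCSpace_union3 (h₁₂ : IsCSpace (c₁ ∪ c₂)) (h₁₃ : IsCSpace (c₁ ∪ c₃))
    (h₂₃ : IsCSpace (c₂ ∪ c₃)) : IsCSpace (c₁ ∪ (c₂ ∪ c₃)) := by
  have hG : IsGraph (c₁ ∪ (c₂ ∪ c₃)).G :=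
    IsGraph.union3 h₁₂.2.2.2.2.1 h₁₃.2.2.2.2.1 h₂₃.2.2.2.2.1
  have hsig : IsFunctionOn (c₁ ∪ (c₂ ∪ c₃)).sig (c₁ ∪ (c₂ ∪ c₃)).C :=
    h₁₂.2.2.1.union3 h₁₃.2.2.1 h₂₃.2.2.1
  refine ⟨h₁₂.1.union3 h₁₃.1 h₂₃.1, disjoint_union3 h₁₂.2.1 h₁₃.2.1 h₂₃.2.1, hsig,
    fun c ins out hc => ?_, IncPairwiseCovered.isStructureGraph ?_ hG hsig ?_ ?_⟩
  · obtain ⟨P, hPQ, hP, hc, -⟩ :=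
      exists_subspace_of_mem_union3 h₁₂ h₁₃ h₂₃ CSpace.sig (fun _ _ => rfl) hc hc
    obtain ⟨hne, hins, hout⟩ := hP.2.2.2.1 c ins out hc
    exact ⟨hne, fun τ hτ => hPQ.Ty (hins τ hτ), hPQ.Ty hout⟩
  · exact fun p hp p' hp' =>
      exists_subspace_of_mem_union3 h₁₂ h₁₃ h₂₃ (·.G.inc) (fun _ _ => rfl) hp hp'
  · intro x τ hx
    obtain ⟨P, hPQ, hP, hx, -⟩ :=
      exists_subspace_of_mem_union3 h₁₂ h₁₃ h₂₃ (·.G.tl) (fun _ _ => rfl) hx hx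
    exact hPQ.Ty (hP.2.2.2.2.2.1 x τ hx)
  · intro u hu
    obtain ⟨P, hPQ, hP, hu, -⟩ :=
      exists_subspace_of_mem_union3 h₁₂ h₁₃ h₂₃ (·.G.Cf) (fun _ _ => rfl) hu hu
    exact ⟨P, hPQ, hP, hu⟩

end Union3

section IdentificationSpaces

lemma union_union_of_subset {α : Type*} (s : Set α) {t t' : Set α} (h : t ⊆ t') :
    s ∪ t ∪ (s ∪ t') = s ∪ t' := by
  rw [← Set.union_union_distrib_left, Set.union_eq_right.mpr h]

variable {g h : PreGraph V A L} {T : Set V}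

lemma exists_meta_label_union {M M' : Set L} (hM : M ⊆ M')
    (hg : ∀ x ∈ g.Tk, x ∉ T → ∃ τ ∈ M, (x, τ) ∈ g.tl)
    (hh : ∀ x ∈ h.Tk, x ∉ T → ∃ τ ∈ M', (x, τ) ∈ h.tl) :
    ∀ x ∈ (g ∪ h).Tk, x ∉ T → ∃ τ ∈ M', (x, τ) ∈ (g ∪ h).tl := by
  rintro x (hx | hx) hxT
  · obtain ⟨τ, hτ, hxτ⟩ := hg x hx hxT
    exact ⟨τ, hM hτ, Or.inl hxτ⟩
  · obtain ⟨τ, hτ, hxτ⟩ := hh x hx hxT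
    exact ⟨τ, hτ, Or.inr hxτ⟩

lemma not_mem_of_outputTok_union (hgh : IsGraph (g ∪ h)) (hg : IsGraph g) (hh : IsGraph h)
    (hgT : ∀ x ∈ g.Tk, (∃ u ∈ g.Cf, OutputTok g u x) → x ∉ T)
    (hhT : ∀ x ∈ h.Tk, (∃ u ∈ h.Cf, OutputTok h u x) → x ∉ T) :
    ∀ x ∈ (g ∪ h).Tk, (∃ u ∈ (g ∪ h).Cf, OutputTok (g ∪ h) u x) → x ∉ T := by
  rintro x - ⟨u, hu, a, -, hau | hau⟩
  · obtain ⟨huC, hxT⟩ := hg.out_ends hau fun hu' => hgh.not_mem_Tk hu (Or.inl hu')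
    exact hgT x hxT ⟨u, huC, a, hg.mem_Arr_of_inc hau, hau⟩
  · obtain ⟨huC, hxT⟩ := hh.out_ends hau fun hu' => hgh.not_mem_Tk hu (Or.inr hu')
    exact hhT x hxT ⟨u, huC, a, hh.mem_Arr_of_inc hau, hau⟩

end IdentificationSpaces

/-- an inter-representational-system encoding yields a representational system. -/
theorem irse_yields_rsystem {V A L : Type*}
    (R R' : RSystem V A L) (Is'' : CSpace V A L)
    (Ty MTy Ty' MTy' MTy'' : Set L) (le Mle le' Mle' Mle'' : Set (L × L))
    (hE : IsIRSE R R' Is'' Ty le MTy Mle Ty' le' MTy' Mle' MTy'' Mle'') :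
    IsRSystem ⟨R.Gs ∪ R'.Gs, R.Es ∪ R'.Es, (R.Is ∪ R'.Is) ∪ Is''⟩
      (Ty ∪ Ty') (le ∪ le') MTy'' Mle'' := by
  obtain ⟨-, -, hRR', hMPO, hPO'', hTy'', hle'', hIs'', hMTy, hMle, hMeta'', hOut'', hGsIs'',
    hEsIs'', hIsIs'', hGsC'', hEsC'', -⟩ := hE
  obtain ⟨hPO, -, -, hGsTy, hGsle, hGs, hGsFun, hEsTy, hEsle, hEs, hEsTk, hIsTy, hIsle, hIs,
    hMeta, hOut, hGsEs, hGsIs, hEsIs, hGsEsC, hGsIsC, hEsIsC⟩ := hRR'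
  exact ⟨hPO, hMPO, hPO'', hGsTy, hGsle, hGs, hGsFun, hEsTy, hEsle, hEs, hEsTk,
    (congrArg₂ (· ∪ ·) hIsTy hTy'').trans (union_union_of_subset _ hMTy),
    (congrArg₂ (· ∪ ·) hIsle hle'').trans (union_union_of_subset _ hMle), hIsIs'',
    exists_meta_label_union hMTy hMeta hMeta'',
    not_mem_of_outputTok_union hIsIs''.2.2.2.2.1 hIs.2.2.2.2.1 hIs''.2.2.2.2.1 hOut hOut'',
    hGsEs, isCSpace_union3 hGsIs hGsIs'' hIsIs'', isCSpace_union3 hEsIs hEsIs'' hIsIs'',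
    hGsEsC, Set.disjoint_union_right.mpr ⟨hGsIsC, hGsC''.symm⟩,
    Set.disjoint_union_right.mpr ⟨hEsIsC, hEsC''.symm⟩⟩

end RST
end

section
/- Let (g, t) be a construction containing a well-formed trail tr with source t′ and target t. Then every trail tr′ such that tr′ ⊕ tr is a well-formed, non-extendable trail occurs in the trail extension sequence TES(tr). -/
/-! Induction on the derivation of `TES g tr S`. Call `tr'` a completion of `tr` when
`tr' ⊕ tr` is a well-formed non-extendable trail. A non-empty completion ends in an arrow into
`tr.src` that is not in `tr`, so `tr` is extendable; by uni-structuredness that arrow is the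
extending arrow `a` out of the configurator `u`. Since the source of `tr'` is a token, `tr'`
ends in `[c, a]` with `c` an incoming arrow of `u`, and the rest of `tr'` completes
`[c, a] ⊕ tr`; by induction it lies in `TES ([c, a] ⊕ tr)`, so `tr'` lies in the block
`TES ([c, a] ⊕ tr) ◁ [c, a]` of `TES tr`. -/

namespace RST

variable {V A L : Type*}

lemma IsGraph.inc_unique {g : PreGraph V A L} (hg : IsGraph g) {a : A} {v w v' w' : V}
    (h : (a, (v, w)) ∈ g.inc) (h' : (a, (v', w')) ∈ g.inc) : v = v' ∧ w = w' := by
  obtain ⟨-, ⟨hdom, hfun⟩, -⟩ := hg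
  obtain ⟨_, -, huniq⟩ := hfun a (hdom _ h)
  simpa using (huniq _ h).trans (huniq _ h').symm

lemma IsGraph.mem_Tk_of_inc_of_mem_Cf {g : PreGraph V A L} (hg : IsGraph g) {a : A} {v u : V}
    (h : (a, (v, u)) ∈ g.inc) (hu : u ∈ g.Cf) : v ∈ g.Tk := by
  rcases hg.2.2.1 a v u h with ⟨hv, -⟩ | ⟨-, hu'⟩
  · exact hv
  · exact absurd hu' (Set.disjoint_right.mp hg.1 hu)

lemma IsGraph.mem_Cf_of_inc_of_mem_Tk {g : PreGraph V A L} (hg : IsGraph g) {a : A} {u v : V}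
    (h : (a, (u, v)) ∈ g.inc) (hv : v ∈ g.Tk) : u ∈ g.Cf := by
  rcases hg.2.2.1 a u v h with ⟨-, hv'⟩ | ⟨hu, -⟩
  · exact absurd hv (Set.disjoint_right.mp hg.1 hv')
  · exact hu

lemma chainIn_append {g : PreGraph V A L} {l₁ l₂ : List A} {s t : V} :
    ChainIn g (l₁ ++ l₂) s t ↔ ∃ m, ChainIn g l₁ s m ∧ ChainIn g l₂ m t := by
  induction l₁ generalizing s with
  | nil => simp [ChainIn]
  | cons a l ih => simp only [List.cons_append, ChainIn, ih]; grind

lemma chainIn_singleton {g : PreGraph V A L} {b : A} {s t : V} :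
    ChainIn g [b] s t ↔ b ∈ g.Arr ∧ (b, (s, t)) ∈ g.inc := by
  simp [ChainIn]

lemma ChainIn.src_unique {g : PreGraph V A L} (hg : IsGraph g) {l : List A} {s s' t : V}
    (h : ChainIn g l s t) (h' : ChainIn g l s' t) : s = s' := by
  cases l with
  | nil => exact h.trans h'.symm
  | cons a rest =>
    obtain ⟨-, m, hm, -⟩ := h
    obtain ⟨-, m', hm', -⟩ := h'
    exact (hg.inc_unique hm hm').1

lemma chainIn_append_iff_of_chainIn {g : PreGraph V A L} (hg : IsGraph g) {l₁ l₂ : List A}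
    {s m t : V} (h₂ : ChainIn g l₂ m t) :
    ChainIn g (l₁ ++ l₂) s t ↔ ChainIn g l₁ s m := by
  rw [chainIn_append]
  exact ⟨fun ⟨m', h₁, h₂'⟩ => h₂.src_unique hg h₂' ▸ h₁, fun h₁ => ⟨m, h₁, h₂⟩⟩

structure IsCompletion (g : PreGraph V A L) (tr tr' : Trail V A) : Prop where
  tgt_eq : tr'.tgt = tr.src
  isTrailIn : IsTrailIn g (tr'.append tr)
  wellFormed : WellFormed g (tr'.append tr)
  nonExtendable : NonExtendable g (tr'.append tr)

namespace IsCompletion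

variable {g : PreGraph V A L} {tr tr' : Trail V A}

lemma eq_nil (hg : IsGraph g) (htr : ChainIn g tr.arrows tr.src tr.tgt)
    (h : IsCompletion g tr tr') (hnil : tr'.arrows = []) :
    tr' = Trail.nil tr.src ∧ NonExtendable g tr := by
  obtain ⟨l, s', t'⟩ := tr'
  obtain ⟨rfl : t' = tr.src, ⟨-, hchain, -⟩, -, hne⟩ := h
  subst hnil
  obtain rfl : s' = tr.src := ChainIn.src_unique hg hchain htr
  exact ⟨rfl, hne⟩

lemma dropLast (hg : IsGraph g) (htr : ChainIn g tr.arrows tr.src tr.tgt)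
    (h : IsCompletion g tr tr') {l : List A} {b : A} (hl : tr'.arrows = l ++ [b]) :
    ∃ m, (b, (m, tr.src)) ∈ g.inc ∧ ExtendableBy g tr b ∧
      ChainIn g (b :: tr.arrows) m tr.tgt ∧
      IsCompletion g ⟨b :: tr.arrows, m, tr.tgt⟩ ⟨l, tr'.src, m⟩ := by
  obtain ⟨l', s', t'⟩ := tr'
  obtain ⟨rfl : t' = tr.src, htrail, hwf, hne⟩ := h
  obtain rfl : l' = l ++ [b] := hl
  have hchain : ChainIn g (l ++ [b]) s' tr.src :=
    (chainIn_append_iff_of_chainIn hg htr).mp htrail.2.1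
  obtain ⟨m, -, hb⟩ := chainIn_append.mp hchain
  obtain ⟨hbArr, hbinc⟩ := chainIn_singleton.mp hb
  have hbtr : b ∉ tr.arrows :=
    List.disjoint_of_nodup_append htrail.1 (by simp)
  have happend : (⟨l ++ [b], s', tr.src⟩ : Trail V A).append tr =
      (⟨l, s', m⟩ : Trail V A).append ⟨b :: tr.arrows, m, tr.tgt⟩ := by
    simp [Trail.append]
  rw [happend] at htrail hwf hne
  exact ⟨m, hbinc, ⟨hbArr, hbtr, m, hbinc⟩, ⟨hbArr, tr.src, hbinc, htr⟩, ⟨rfl, htrail, hwf, hne⟩⟩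

end IsCompletion

lemma TES.mem_of_isCompletion {g : PreGraph V A L} (hg : IsGraph g) (huni : UniStructured g)
    {tr : Trail V A} {S : List (Trail V A)} (hTES : TES g tr S) (hsrc : tr.src ∈ g.Tk)
    (htr : ChainIn g tr.arrows tr.src tr.tgt) {tr' : Trail V A}
    (hcomp : IsCompletion g tr tr') : tr' ∈ S := by
  induction hTES generalizing tr' with
  | nonext tr hne =>
    rcases tr'.arrows.eq_nil_or_concat with hnil | ⟨l, b, hl⟩
    · simp [(hcomp.eq_nil hg htr hnil).1, Trail.nil]
    · obtain ⟨m, -, hb, -⟩ := hcomp.dropLast hg htr (by simpa using hl)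
      exact absurd ⟨b, hb⟩ hne
  | ext tr a u ars Ss hext hinc hars hlen _ ih =>
    have hu : u ∈ g.Cf := hg.mem_Cf_of_inc_of_mem_Tk hinc hsrc
    rcases tr'.arrows.eq_nil_or_concat with hnil | ⟨l, b, hl⟩
    · exact absurd ⟨a, hext⟩ (hcomp.eq_nil hg htr hnil).2
    obtain ⟨m, hbinc, hb, hchain, hcomp₁⟩ := hcomp.dropLast hg htr (by simpa using hl)
    obtain rfl : a = b := huni _ hsrc a hext.1 b hb.1 ⟨u, hinc⟩ ⟨m, hbinc⟩
    obtain rfl : u = m := (hg.inc_unique hinc hbinc).1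
    rcases l.eq_nil_or_concat with hnil | ⟨l₁, c, hl₁⟩
    · have hsrc' : tr'.src = u := congrArg Trail.src (hcomp₁.eq_nil hg hchain hnil).1
      exact absurd (hsrc' ▸ hcomp₁.wellFormed.1) (Set.disjoint_right.mp hg.1 hu)
    obtain ⟨q, hcinc, hc, hchain₂, hcomp₂⟩ := hcomp₁.dropLast hg hchain (by simpa using hl₁)
    obtain ⟨i, hi⟩ := List.getElem?_of_mem ((hars.2.1 c).mpr ⟨hc.1, q, hcinc⟩)
    have hi' : i < Ss.length := hlen ▸ (List.getElem?_eq_some_iff.mp hi).1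
    have hSi : Ss[i]? = some Ss[i] := List.getElem?_eq_getElem hi'
    have hmem := ih i c q Ss[i] hi hSi hcinc (hg.mem_Tk_of_inc_of_mem_Cf hcinc hu) hchain₂ hcomp₂
    have htr' : tr' = ⟨l₁ ++ [c, a], tr'.src, tr.src⟩ := by
      have htgt := hcomp.tgt_eq
      obtain ⟨l', s', t'⟩ := tr'
      simp_all
    rw [htr', List.mem_flatten]
    exact ⟨_, List.mem_of_getElem? (List.getElem?_zipWith_eq_some.mpr ⟨c, _, hi, hSi, rfl⟩),
      List.mem_map_of_mem hmem⟩

theorem tes_is_complete_general {V A L : Type*}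
    (Cs : CSpace V A L)
    (g : PreGraph V A L) (t : V) (hc : IsConstruction Cs g t)
    (tr : Trail V A) (htr : IsTrailIn g tr) (hwf : WellFormed g tr)
    (S : List (Trail V A)) (hTES : TES g tr S) :
    ∀ tr' : Trail V A, tr'.tgt = tr.src →
      IsTrailIn g (tr'.append tr) → WellFormed g (tr'.append tr) →
      NonExtendable g (tr'.append tr) → tr' ∈ S :=
  fun _ htgt htrail hwf' hne =>
    hTES.mem_of_isCompletion hc.2.1.1 hc.2.2.2.2.2.1 hwf.1 htr.2.1 ⟨htgt, htrail, hwf', hne⟩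

/-- every trail extending a well-formed trail to a well-formed non-extendable
trail occurs in its trail extension sequence. -/
theorem tes_is_complete {V A L : Type*}
    (Cs : CSpace V A L) (hCs : IsCSpace Cs)
    (g : PreGraph V A L) (t t' : V) (hc : IsConstruction Cs g t)
    (tr : Trail V A) (htr : IsTrailIn g tr) (hwf : WellFormed g tr)
    (hsrc : tr.src = t') (htgt : tr.tgt = t)
    (S : List (Trail V A)) (hTES : TES g tr S) :
    ∀ tr' : Trail V A, tr'.tgt = tr.src →
      IsTrailIn g (tr'.append tr) → WellFormed g (tr'.append tr) →
      NonExtendable g (tr'.append tr) → tr' ∈ S :=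
  tes_is_complete_general Cs g t hc tr htr hwf S hTES

end RST
end
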